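/- arXiv:1807.11224 — 4 statements merged into one kernel-verified Lean document; each statement's English description precedes it below -/
import Mathlib

section
/- Let A be a nonnegative tensor of order m and dimension n, and suppose some eigenvalue λ of A has a strictly positive eigenvector x (A x = λ x^{[m-1]}, x > 0 componentwise). Then λ = ρ(A), the spectral radius of A. -/
/-! If `A y = μ y^{[p]}` with `y ≠ 0`, scale the positive eigenvector `x` so that `|y| ≤ c x`
with equality at some index `i`. Since `A ≥ 0`, taking moduli in row `i` gives
`|μ| (c x_i)^p ≤ c^p (A x)_i = λ (c x_i)^p`, so `|μ| ≤ λ`. As `λ` itself is an eigenvalue,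
it is the largest modulus of an eigenvalue. -/

open scoped BigOperators

namespace TensorSR

variable {n p : ℕ}

/-- `(A x)_i` for a tensor whose rows are indexed by `Fin n` and whose
"tails" (the remaining `p` indices, so the tensor has order `p+1`) are
functions `Fin p → Fin n`.  The real entries are coerced to `ℂ`. -/
noncomputable def tApply (A : Fin n → (Fin p → Fin n) → ℝ) (x : Fin n → ℂ) (i : Fin n) : ℂ :=
  ∑ t : Fin p → Fin n, (A i t : ℂ) * ∏ j, x (t j)

/-- `lam` is an eigenvalue of the tensor `A`: `A x = lam x^{[p]}` for some `x ≠ 0`. -/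
def IsEigenvalue (A : Fin n → (Fin p → Fin n) → ℝ) (lam : ℂ) : Prop :=
  ∃ x : Fin n → ℂ, x ≠ 0 ∧ ∀ i, tApply A x i = lam * (x i) ^ p

/-- The spectral radius: the sup of moduli of eigenvalues. -/
noncomputable def specRad (A : Fin n → (Fin p → Fin n) → ℝ) : ℝ :=
  sSup {r : ℝ | ∃ lam : ℂ, IsEigenvalue A lam ∧ r = ‖lam‖}

/-- `A` is entrywise nonnegative. -/
def Nonneg (A : Fin n → (Fin p → Fin n) → ℝ) : Prop := ∀ i t, 0 ≤ A i t

/-- Weak irreducibility: there is no nonempty proper `I ⊆ [n]` such that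
`a_{i t} = 0` whenever `i ∈ I` and some entry of `t` lies outside `I`. -/
def WeaklyIrreducible (A : Fin n → (Fin p → Fin n) → ℝ) : Prop :=
  ¬ ∃ I : Set (Fin n), I.Nonempty ∧ I ≠ Set.univ ∧
      ∀ i ∈ I, ∀ t : Fin p → Fin n, (∃ j, t j ∉ I) → A i t = 0

/-- The `i`-th row sum of `A`. -/
def rowSum (A : Fin n → (Fin p → Fin n) → ℝ) (i : Fin n) : ℝ := ∑ t, A i t

/-- `j ∈ N(i)`: some nonzero entry in row `i` involves index `j`. -/
def Nbr (A : Fin n → (Fin p → Fin n) → ℝ) (i j : Fin n) : Prop :=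
  ∃ t, A i t ≠ 0 ∧ ∃ q, t q = j

variable {A : Fin n → (Fin p → Fin n) → ℝ}

theorem norm_tApply_le (hA : Nonneg A) {x : Fin n → ℝ} {y : Fin n → ℂ} {c : ℝ}
    (hyx : ∀ j, ‖y j‖ ≤ c * x j) (i : Fin n) :
    ‖tApply A y i‖ ≤ c ^ p * ∑ t : Fin p → Fin n, A i t * ∏ j, x (t j) := by
  calc ‖tApply A y i‖
      ≤ ∑ t : Fin p → Fin n, ‖(A i t : ℂ) * ∏ j, y (t j)‖ := norm_sum_le _ _
    _ ≤ ∑ t : Fin p → Fin n, A i t * (c ^ p * ∏ j, x (t j)) := by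
        refine Finset.sum_le_sum fun t _ => ?_
        rw [norm_mul, norm_prod, Complex.norm_real, Real.norm_of_nonneg (hA i t)]
        refine mul_le_mul_of_nonneg_left ?_ (hA i t)
        calc ∏ j, ‖y (t j)‖ ≤ ∏ j, c * x (t j) :=
              Finset.prod_le_prod (fun j _ => norm_nonneg _) (fun j _ => hyx (t j))
          _ = c ^ p * ∏ j, x (t j) := by simp [Finset.prod_mul_distrib]
    _ = c ^ p * ∑ t : Fin p → Fin n, A i t * ∏ j, x (t j) := by
        rw [Finset.mul_sum]; exact Finset.sum_congr rfl fun t _ => by ring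

theorem norm_le_of_pos_eigenvector (hA : Nonneg A) {lam : ℝ} {x : Fin n → ℝ}
    (hx : ∀ i, 0 < x i)
    (heig : ∀ i, ∑ t : Fin p → Fin n, A i t * ∏ j, x (t j) = lam * x i ^ p)
    {μ : ℂ} (hμ : IsEigenvalue A μ) : ‖μ‖ ≤ lam := by
  obtain ⟨y, hy0, hyeig⟩ := hμ
  obtain ⟨k, hk⟩ : ∃ k, y k ≠ 0 := Function.ne_iff.mp hy0
  obtain ⟨i, -, hi⟩ := Finset.exists_max_image Finset.univ (fun j => ‖y j‖ / x j)
    ⟨k, Finset.mem_univ _⟩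
  set c := ‖y i‖ / x i
  have hyx : ∀ j, ‖y j‖ ≤ c * x j := fun j =>
    (div_le_iff₀ (hx j)).1 (hi j (Finset.mem_univ _))
  have hc : 0 < c :=
    (div_pos (norm_pos_iff.mpr hk) (hx k)).trans_le (hi k (Finset.mem_univ _))
  have hyi : ‖y i‖ = c * x i := (div_mul_cancel₀ _ (hx i).ne').symm
  have hrow : ‖μ‖ * (c * x i) ^ p ≤ lam * (c * x i) ^ p :=
    calc ‖μ‖ * (c * x i) ^ p = ‖tApply A y i‖ := by
          rw [hyeig i, norm_mul, norm_pow, hyi]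
      _ ≤ c ^ p * (lam * x i ^ p) := heig i ▸ norm_tApply_le hA hyx i
      _ = lam * (c * x i) ^ p := by ring
  exact le_of_mul_le_mul_right hrow (pow_pos (mul_pos hc (hx i)) p)

theorem isEigenvalue_ofReal {lam : ℝ} {x : Fin n → ℝ} (hx : x ≠ 0)
    (heig : ∀ i, ∑ t : Fin p → Fin n, A i t * ∏ j, x (t j) = lam * x i ^ p) :
    IsEigenvalue A lam := by
  refine ⟨fun i => (x i : ℂ), fun h => hx (funext fun i => by simpa using congrFun h i),
    fun i => ?_⟩
  simpa [tApply] using congrArg ((↑) : ℝ → ℂ) (heig i)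

theorem specRad_eq_of_pos_eigenvector [NeZero n] (hA : Nonneg A) {lam : ℝ}
    {x : Fin n → ℝ} (hx : ∀ i, 0 < x i)
    (heig : ∀ i, ∑ t : Fin p → Fin n, A i t * ∏ j, x (t j) = lam * x i ^ p) :
    specRad A = lam := by
  have hbound : ∀ {μ : ℂ}, IsEigenvalue A μ → ‖μ‖ ≤ lam :=
    norm_le_of_pos_eigenvector hA hx heig
  have hlam := isEigenvalue_ofReal (Function.ne_iff.mpr ⟨0, (hx 0).ne'⟩) heig
  have hlam_norm : ‖(lam : ℂ)‖ = lam := by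
    rw [Complex.norm_real, Real.norm_of_nonneg ((norm_nonneg _).trans (hbound hlam))]
  have hmem : lam ∈ {r : ℝ | ∃ μ : ℂ, IsEigenvalue A μ ∧ r = ‖μ‖} := ⟨lam, hlam, hlam_norm.symm⟩
  have hub : ∀ r ∈ {r : ℝ | ∃ μ : ℂ, IsEigenvalue A μ ∧ r = ‖μ‖}, r ≤ lam := by
    rintro r ⟨μ, hμ, rfl⟩
    exact hbound hμ
  exact le_antisymm (csSup_le ⟨lam, hmem⟩ hub) (le_csSup ⟨lam, hub⟩ hmem)

end TensorSR

open TensorSR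

theorem stmt5_general {n m : ℕ} (hn : 0 < n)
    (A : Fin n → (Fin (m-1) → Fin n) → ℝ) (hA : Nonneg A)
    (lam : ℝ) (x : Fin n → ℝ) (hx : ∀ i, 0 < x i)
    (heig : ∀ i, (∑ t : Fin (m-1) → Fin n, A i t * ∏ j, x (t j)) = lam * (x i) ^ (m-1)) :
    specRad A = lam :=
  haveI : NeZero n := ⟨hn.ne'⟩
  specRad_eq_of_pos_eigenvector hA hx heig

theorem stmt5 {n m : ℕ} (hn : 0 < n) (hm : 2 ≤ m)
    (A : Fin n → (Fin (m-1) → Fin n) → ℝ) (hA : Nonneg A)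
    (lam : ℝ) (x : Fin n → ℝ) (hx : ∀ i, 0 < x i)
    (heig : ∀ i, (∑ t : Fin (m-1) → Fin n, A i t * ∏ j, x (t j)) = lam * (x i) ^ (m-1)) :
    specRad A = lam :=
  stmt5_general hn A hA lam x hx heig
end

section
/- Let A be a nonnegative tensor of order m and dimension n. Then min_i r_i(A) ≤ ρ(A) ≤ max_i r_i(A), where r_i(A) is the i-th row sum. Moreover if A is weakly irreducible, equality on either side holds if and only if all row sums are equal. -/
/-!
Collatz–Wielandt argument. If `0 ≤ x ≠ 0` and `s x^[p] ≤ A x`, comparing at a largest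
coordinate of `x` gives `s ≤ max_i r_i(A)`, while the all-ones vector shows that `min_i r_i(A)`
is such an `s`. By compactness the greatest such `s` is attained on the simplex; for a positive
tensor a maximiser is an eigenvector (otherwise raising one coordinate makes every row strict),
and letting `ε → 0` in `A + ε` gives an eigenpair `(r, x)` of `A` with `x ≥ 0` and `r` the
greatest such `s`. Since `|λ| |y|^[p] ≤ A |y|` for every eigenpair `(λ, y)`, `ρ(A) = r`.

For weakly irreducible `A`: if `r` is the largest row sum, no nonzero entry in a row where `x`
is maximal reaches a smaller coordinate, so `x` is constant and all row sums equal `r`. If `r` is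
the smallest row sum but some row sum is larger, the all-ones vector is strict in that row, and
raising the strict coordinates spreads strictness along nonzero entries to every row, which
produces an admissible `s > r`.
-/

open scoped BigOperators

namespace TensorSR

variable {n p : ℕ}

open Finset Filter Topology

def realApply (A : Fin n → (Fin p → Fin n) → ℝ) (x : Fin n → ℝ) (i : Fin n) : ℝ :=
  ∑ t : Fin p → Fin n, A i t * ∏ j, x (t j)

/-- The Collatz–Wielandt set of `A`. -/
def cwSet (A : Fin n → (Fin p → Fin n) → ℝ) : Set ℝ :=
  {s | ∃ x : Fin n → ℝ, 0 ≤ x ∧ x ≠ 0 ∧ ∀ i, s * x i ^ p ≤ realApply A x i}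

lemma exists_gt_forall_lt {ι : Type*} [Finite ι] {f : ι → ℝ → ℝ} {c : ι → ℝ} {a : ℝ}
    (hf : ∀ i, ContinuousAt (f i) a) (h : ∀ i, f i a < c i) : ∃ b > a, ∀ i, f i b < c i := by
  have hev : ∀ᶠ b in 𝓝 a, ∀ i, f i b < c i :=
    eventually_all.2 fun i => (hf i).eventually_lt continuousAt_const (h i)
  obtain ⟨b, hb, hab⟩ :=
    ((hev.filter_mono nhdsWithin_le_nhds).and (self_mem_nhdsWithin (s := Set.Ioi a))).exists
  exact ⟨b, hab, hb⟩

lemma prod_lt_pow_card {ι : Type*} [Fintype ι] {f : ι → ℝ} {M : ℝ} (hf : 0 ≤ f)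
    (hfM : ∀ i, f i ≤ M) {j : ι} (hj : f j < M) : ∏ i, f i < M ^ Fintype.card ι := by
  by_cases h0 : ∃ i, f i = 0
  · obtain ⟨i, hi⟩ := h0
    rw [prod_eq_zero (mem_univ i) hi]
    exact pow_pos ((hf j).trans_lt hj) _
  · push Not at h0
    simpa using prod_lt_prod (fun i _ => (hf i).lt_of_ne' (h0 i)) (fun i _ => hfM i)
      ⟨j, mem_univ j, hj⟩

lemma ne_zero_of_mem_stdSimplex {ι : Type*} [Fintype ι] {x : ι → ℝ}
    (hx : x ∈ stdSimplex ℝ ι) : x ≠ 0 := fun h0 => by simpa [h0] using hx.2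

section

variable {A B : Fin n → (Fin p → Fin n) → ℝ} {x y : Fin n → ℝ} {r s : ℝ}

lemma realApply_nonneg (hA : Nonneg A) (hx : 0 ≤ x) (i : Fin n) : 0 ≤ realApply A x i :=
  sum_nonneg fun t _ => mul_nonneg (hA i t) (prod_nonneg fun _ _ => hx _)

lemma realApply_mono (hA : Nonneg A) (hx : 0 ≤ x) (hxy : x ≤ y) (i : Fin n) :
    realApply A x i ≤ realApply A y i :=
  sum_le_sum fun t _ =>
    mul_le_mul_of_nonneg_left (prod_le_prod (fun _ _ => hx _) fun _ _ => hxy _) (hA i t)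

lemma realApply_lt_realApply (hA : Nonneg A) (hx : 0 ≤ x) (hxy : x ≤ y) {i : Fin n}
    {t : Fin p → Fin n} (ht : A i t ≠ 0) (hlt : ∏ j, x (t j) < ∏ j, y (t j)) :
    realApply A x i < realApply A y i :=
  sum_lt_sum (fun t _ =>
      mul_le_mul_of_nonneg_left (prod_le_prod (fun _ _ => hx _) fun _ _ => hxy _) (hA i t))
    ⟨t, mem_univ t, mul_lt_mul_of_pos_left hlt ((hA i t).lt_of_ne' ht)⟩

lemma realApply_mono_left (hAB : ∀ i t, A i t ≤ B i t) (hx : 0 ≤ x) (i : Fin n) :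
    realApply A x i ≤ realApply B x i :=
  sum_le_sum fun t _ => mul_le_mul_of_nonneg_right (hAB i t) (prod_nonneg fun _ _ => hx _)

lemma realApply_smul (A : Fin n → (Fin p → Fin n) → ℝ) (c : ℝ) (x : Fin n → ℝ) (i : Fin n) :
    realApply A (c • x) i = c ^ p * realApply A x i := by
  simp only [realApply, Pi.smul_apply, smul_eq_mul, prod_mul_distrib, prod_const, card_univ,
    Fintype.card_fin, mul_sum]
  exact sum_congr rfl fun t _ => by ring

lemma realApply_const (A : Fin n → (Fin p → Fin n) → ℝ) (c : ℝ) (i : Fin n) :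
    realApply A (fun _ => c) i = rowSum A i * c ^ p := by
  simp [realApply, rowSum, sum_mul]

lemma cwSet_mono (hAB : ∀ i t, A i t ≤ B i t) : cwSet A ⊆ cwSet B := by
  rintro s ⟨x, hx, hx0, h⟩
  exact ⟨x, hx, hx0, fun i => (h i).trans (realApply_mono_left hAB hx i)⟩

lemma mem_cwSet_of_mem_stdSimplex (hx : x ∈ stdSimplex ℝ (Fin n))
    (h : ∀ i, r * x i ^ p ≤ realApply A x i) : r ∈ cwSet A :=
  ⟨x, hx.1, ne_zero_of_mem_stdSimplex hx, h⟩

lemma exists_mem_stdSimplex_of_mem_cwSet (hs : s ∈ cwSet A) :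
    ∃ x ∈ stdSimplex ℝ (Fin n), ∀ i, s * x i ^ p ≤ realApply A x i := by
  obtain ⟨x, hx, hx0, h⟩ := hs
  obtain ⟨k, hk⟩ := Function.ne_iff.1 hx0
  have hsum : 0 < ∑ i, x i := sum_pos' (fun i _ => hx i) ⟨k, mem_univ k, (hx k).lt_of_ne' hk⟩
  refine ⟨(∑ i, x i)⁻¹ • x, ⟨fun i => mul_nonneg (by positivity) (hx i), ?_⟩, fun i => ?_⟩
  · simp [← mul_sum, hsum.ne']
  · rw [realApply_smul, Pi.smul_apply, smul_eq_mul, mul_pow]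
    calc s * ((∑ i, x i)⁻¹ ^ p * x i ^ p) = (∑ i, x i)⁻¹ ^ p * (s * x i ^ p) := by ring
      _ ≤ (∑ i, x i)⁻¹ ^ p * realApply A x i :=
        mul_le_mul_of_nonneg_left (h i) (by positivity)

lemma zero_mem_cwSet [NeZero n] (hA : Nonneg A) : (0 : ℝ) ∈ cwSet A :=
  ⟨1, zero_le_one, one_ne_zero, fun i => by simpa using realApply_nonneg hA zero_le_one i⟩

lemma iInf_rowSum_mem_cwSet [NeZero n] : ⨅ i, rowSum A i ∈ cwSet A :=
  ⟨fun _ => 1, fun _ => zero_le_one, Function.ne_iff.2 ⟨0, one_ne_zero⟩, fun i => by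
    simpa [realApply_const] using ciInf_le (Finite.bddBelow_range _) i⟩

lemma exists_le_rowSum_of_mem_cwSet (hA : Nonneg A) (hs : s ∈ cwSet A) :
    ∃ i, s ≤ rowSum A i := by
  obtain ⟨x, hx, hx0, h⟩ := hs
  obtain ⟨k, hk⟩ := Function.ne_iff.1 hx0
  have : Nonempty (Fin n) := ⟨k⟩
  obtain ⟨i, hi⟩ := Finite.exists_max x
  refine ⟨i, le_of_mul_le_mul_right ?_ (pow_pos (((hx k).lt_of_ne' hk).trans_le (hi k)) p)⟩
  calc s * x i ^ p ≤ realApply A x i := h i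
    _ ≤ realApply A (fun _ => x i) i := realApply_mono hA hx hi i
    _ = rowSum A i * x i ^ p := realApply_const A _ i

lemma le_iSup_rowSum_of_mem_cwSet (hA : Nonneg A) (hs : s ∈ cwSet A) :
    s ≤ ⨆ i, rowSum A i :=
  let ⟨i, hi⟩ := exists_le_rowSum_of_mem_cwSet hA hs
  hi.trans (le_ciSup (Finite.bddAbove_range _) i)

lemma norm_mem_cwSet (hA : Nonneg A) {μ : ℂ} (h : IsEigenvalue A μ) : ‖μ‖ ∈ cwSet A := by
  obtain ⟨y, hy0, hy⟩ := h
  refine ⟨fun j => ‖y j‖, fun j => norm_nonneg _,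
    fun h0 => hy0 (funext fun j => norm_eq_zero.1 (congrFun h0 j)), fun i => ?_⟩
  calc ‖μ‖ * ‖y i‖ ^ p = ‖tApply A y i‖ := by rw [hy i, norm_mul, norm_pow]
    _ ≤ ∑ t, ‖(A i t : ℂ) * ∏ j, y (t j)‖ := norm_sum_le _ _
    _ = realApply A (fun j => ‖y j‖) i := sum_congr rfl fun t _ => by
      rw [norm_mul, norm_prod, Complex.norm_real, Real.norm_of_nonneg (hA i t)]

lemma isEigenvalue_ofReal_s6 (hx : x ≠ 0) (h : ∀ i, realApply A x i = r * x i ^ p) :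
    IsEigenvalue A r := by
  refine ⟨fun i => x i, fun h0 => hx (funext fun i => by simpa using congrFun h0 i),
    fun i => ?_⟩
  have : tApply A (fun i => (x i : ℂ)) i = realApply A x i := by
    simp [tApply, realApply]
  rw [this, h i]
  push_cast
  ring

lemma exists_gt_mem_cwSet (hx : 0 ≤ x) (hx0 : x ≠ 0)
    (h : ∀ i, r * x i ^ p < realApply A x i) : ∃ s > r, s ∈ cwSet A := by
  obtain ⟨s, hs, hlt⟩ :=
    exists_gt_forall_lt (f := fun i s => s * x i ^ p) (fun i => by fun_prop) h
  exact ⟨s, hs, x, hx, hx0, fun i => (hlt i).le⟩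

lemma exists_raise_on (hA : Nonneg A) (hx : 0 ≤ x) (hsub : ∀ i, r * x i ^ p ≤ realApply A x i)
    (S : Finset (Fin n)) (hS : ∀ i ∈ S, r * x i ^ p < realApply A x i) :
    ∃ z, x ≤ z ∧ (∀ i ∈ S, x i < z i) ∧ (∀ i ∉ S, z i = x i) ∧
      (∀ i, r * z i ^ p ≤ realApply A z i) ∧ ∀ i ∈ S, r * z i ^ p < realApply A z i := by
  obtain ⟨δ, hδ, hlt⟩ := exists_gt_forall_lt (ι := S) (a := 0)
    (f := fun i δ => r * (x i + δ) ^ p) (c := fun i => realApply A x i) (fun i => by fun_prop)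
    (fun i => by simpa using hS i i.2)
  set z : Fin n → ℝ := fun i => if i ∈ S then x i + δ else x i
  have hxz : x ≤ z := fun i => by dsimp only [z]; split_ifs <;> linarith
  have hzS : ∀ i ∈ S, r * z i ^ p < realApply A z i := fun i hi => by
    simp only [z, if_pos hi]
    exact (hlt ⟨i, hi⟩).trans_le (realApply_mono hA hx hxz i)
  refine ⟨z, hxz, fun i hi => by simp [z, hi, hδ], fun i hi => if_neg hi, fun i => ?_, hzS⟩
  by_cases hi : i ∈ S
  · exact (hzS i hi).le
  · rw [show z i = x i from if_neg hi]
    exact (hsub i).trans (realApply_mono hA hx hxz i)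

lemma WeaklyIrreducible.exists_ne_zero (hwi : WeaklyIrreducible A) {I : Set (Fin n)}
    (hI : I.Nonempty) (hIu : I ≠ Set.univ) : ∃ i ∈ I, ∃ t, (∃ j, t j ∉ I) ∧ A i t ≠ 0 := by
  by_contra! h
  exact hwi ⟨I, hI, hIu, h⟩

lemma exists_forall_lt_of_weaklyIrreducible (hA : Nonneg A) (hwi : WeaklyIrreducible A)
    {S : Finset (Fin n)} (hS : S.Nonempty) (hx : ∀ i, 0 < x i)
    (hsub : ∀ i, r * x i ^ p ≤ realApply A x i)
    (hstrict : ∀ i ∈ S, r * x i ^ p < realApply A x i) :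
    ∃ y : Fin n → ℝ, (∀ i, 0 < y i) ∧ ∀ i, r * y i ^ p < realApply A y i := by
  obtain ⟨k, hk⟩ : ∃ k, #Sᶜ = k := ⟨_, rfl⟩
  induction k generalizing x S with
  | zero =>
    have hSu : S = univ := (compl_eq_empty_iff S).1 (card_eq_zero.1 hk)
    exact ⟨x, hx, fun i => hstrict i (hSu ▸ mem_univ i)⟩
  | succ k ih =>
    obtain ⟨i, hi, t, ⟨j, hj⟩, ht⟩ := hwi.exists_ne_zero (I := {i | i ∉ S})
      (by obtain ⟨i, hi⟩ := card_pos.1 (by omega : 0 < #Sᶜ); exact ⟨i, mem_compl.1 hi⟩)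
      (fun h => by obtain ⟨s, hs⟩ := hS; exact Set.eq_univ_iff_forall.1 h s hs)
    replace hi : i ∉ S := hi
    replace hj : t j ∈ S := not_not.1 hj
    have hx0 : 0 ≤ x := fun i => (hx i).le
    obtain ⟨z, hxz, hzS, hzS', hzsub, hzstrict⟩ := exists_raise_on hA hx0 hsub S hstrict
    have hzi : r * z i ^ p < realApply A z i := by
      rw [hzS' i hi]
      exact (hsub i).trans_lt (realApply_lt_realApply hA hx0 hxz ht
        (prod_lt_prod (fun _ _ => hx _) (fun _ _ => hxz _) ⟨j, mem_univ j, hzS _ hj⟩))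
    refine ih (S := insert i S) (insert_nonempty i S) (fun q => (hx q).trans_le (hxz q)) hzsub
      (forall_mem_insert _ _ _ |>.2 ⟨hzi, hzstrict⟩) ?_
    rw [compl_insert, card_erase_of_mem (mem_compl.2 hi), hk, Nat.add_sub_cancel]

lemma realApply_eq_of_pos_of_mem_upperBounds (hp : 0 < p) (hA : ∀ i t, 0 < A i t) (hx : 0 ≤ x)
    (hx0 : x ≠ 0) (hsub : ∀ i, r * x i ^ p ≤ realApply A x i) (hr : r ∈ upperBounds (cwSet A))
    (i : Fin n) : realApply A x i = r * x i ^ p := by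
  have hA' : Nonneg A := fun i t => (hA i t).le
  by_contra hne
  obtain ⟨z, hxz, hzS, hzS', -, hzstrict⟩ :=
    exists_raise_on hA' hx hsub {i} (by simpa using (hsub i).lt_of_ne' hne)
  -- raising `x i` makes every row strict, through its entry at `t = (i, …, i)`
  have hall : ∀ k, r * z k ^ p < realApply A z k := by
    intro k
    by_cases hk : k = i
    · exact hzstrict k (by simp [hk])
    · rw [hzS' k (by simpa using hk)]
      refine (hsub k).trans_lt (realApply_lt_realApply hA' hx hxz (hA k fun _ => i).ne' ?_)
      simpa using pow_lt_pow_left₀ (hzS i (mem_singleton_self i)) (hx i) hp.ne'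
  obtain ⟨s, hs, hsA⟩ :=
    exists_gt_mem_cwSet (hx.trans hxz) (fun h => hx0 (le_antisymm (h ▸ hxz) hx)) hall
  exact (hr hsA).not_gt hs

lemma exists_mem_stdSimplex_isGreatest [NeZero n] (hA : Nonneg A) :
    ∃ r, ∃ x ∈ stdSimplex ℝ (Fin n), (∀ i, r * x i ^ p ≤ realApply A x i) ∧
      r ∈ upperBounds (cwSet A) := by
  set K : Set (ℝ × (Fin n → ℝ)) := (Set.Icc 0 (⨆ i, rowSum A i) ×ˢ stdSimplex ℝ (Fin n)) ∩
    {q | ∀ i, q.1 * q.2 i ^ p ≤ realApply A q.2 i}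
  have hK : IsCompact K := by
    refine (isCompact_Icc.prod (isCompact_stdSimplex _ _)).inter_right ?_
    simp only [Set.ofPred_forall]
    exact isClosed_iInter fun i => isClosed_le (by fun_prop) (by unfold realApply; fun_prop)
  have hmemK : ∀ s ∈ cwSet A, 0 ≤ s → ∃ y, (s, y) ∈ K := fun s hs hs0 =>
    let ⟨y, hy, hsy⟩ := exists_mem_stdSimplex_of_mem_cwSet hs
    ⟨y, ⟨⟨hs0, le_iSup_rowSum_of_mem_cwSet hA hs⟩, hy⟩, hsy⟩
  obtain ⟨y₀, hy₀⟩ := hmemK 0 (zero_mem_cwSet hA) le_rfl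
  obtain ⟨⟨r, x⟩, ⟨⟨-, hx⟩, hsub⟩, hmax⟩ :=
    hK.exists_isMaxOn ⟨_, hy₀⟩ continuous_fst.continuousOn
  refine ⟨r, x, hx, hsub, fun s hs => ?_⟩
  rcases lt_or_ge s 0 with hs0 | hs0
  · exact hs0.le.trans (hmax hy₀)
  · obtain ⟨y, hy⟩ := hmemK s hs hs0
    exact hmax hy

lemma exists_eigenpair_of_pos [NeZero n] (hp : 0 < p) (hA : ∀ i t, 0 < A i t) :
    ∃ r, ∃ x ∈ stdSimplex ℝ (Fin n), (∀ i, realApply A x i = r * x i ^ p) ∧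
      r ∈ upperBounds (cwSet A) := by
  obtain ⟨r, x, hx, hsub, hr⟩ := exists_mem_stdSimplex_isGreatest fun i t => (hA i t).le
  exact ⟨r, x, hx, realApply_eq_of_pos_of_mem_upperBounds hp hA hx.1
    (ne_zero_of_mem_stdSimplex hx) hsub hr, hr⟩

theorem exists_perron_eigenpair [NeZero n] (hp : 0 < p) (hA : Nonneg A) :
    ∃ r, ∃ x ∈ stdSimplex ℝ (Fin n), (∀ i, realApply A x i = r * x i ^ p) ∧
      r ∈ upperBounds (cwSet A) := by
  set ε : ℕ → ℝ := fun k => 1 / ((k : ℝ) + 1)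
  set B : ℕ → Fin n → (Fin p → Fin n) → ℝ := fun k i t => A i t + ε k
  have hε : ∀ k, 0 < ε k := fun k => by positivity
  have hAB : ∀ k i t, A i t ≤ B k i t := fun k i t => le_add_of_nonneg_right (hε k).le
  have hBB : ∀ k i t, B k i t ≤ B 0 i t := fun k i t =>
    add_le_add_right (one_div_le_one_div_of_le (by positivity) (by simp)) _
  have hB : ∀ k, Nonneg (B k) := fun k i t => (hA i t).trans (hAB k i t)
  choose r x hx heig hr using fun k =>
    exists_eigenpair_of_pos hp fun i t => add_pos_of_nonneg_of_pos (hA i t) (hε k)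
  have hbound : ∀ k, (r k, x k) ∈ Set.Icc 0 (⨆ i, rowSum (B 0) i) ×ˢ stdSimplex ℝ (Fin n) :=
    fun k => ⟨⟨hr k (zero_mem_cwSet (hB k)), le_iSup_rowSum_of_mem_cwSet (hB 0)
      (cwSet_mono (hBB k) (mem_cwSet_of_mem_stdSimplex (hx k) fun i => (heig k i).ge))⟩, hx k⟩
  obtain ⟨⟨r₀, x₀⟩, ⟨-, hx₀⟩, φ, hφ, hlim⟩ :=
    (isCompact_Icc.prod (isCompact_stdSimplex _ _)).tendsto_subseq hbound
  have hεlim : Tendsto (ε ∘ φ) atTop (𝓝 0) :=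
    tendsto_one_div_add_atTop_nhds_zero_nat.comp hφ.tendsto_atTop
  refine ⟨r₀, x₀, hx₀, fun i => ?_, fun s hs => ?_⟩
  · have hE : IsClosed {q : ℝ × ℝ × (Fin n → ℝ) |
        realApply (fun i t => A i t + q.1) q.2.2 i = q.2.1 * q.2.2 i ^ p} :=
      isClosed_eq (by unfold realApply; fun_prop) (by fun_prop)
    simpa using hE.mem_of_tendsto (hεlim.prodMk_nhds hlim)
      (Eventually.of_forall fun k => heig (φ k) i)
  · exact ge_of_tendsto ((continuous_fst.tendsto _).comp hlim)
      (Eventually.of_forall fun k => hr (φ k) (cwSet_mono (hAB _) hs))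

lemma specRad_eq [NeZero n] (hA : Nonneg A) (hx : x ∈ stdSimplex ℝ (Fin n))
    (heig : ∀ i, realApply A x i = r * x i ^ p) (hr : r ∈ upperBounds (cwSet A)) :
    specRad A = r := by
  have hr0 : 0 ≤ r := hr (zero_mem_cwSet hA)
  refine IsGreatest.csSup_eq
    ⟨⟨r, isEigenvalue_ofReal_s6 (ne_zero_of_mem_stdSimplex hx) heig, ?_⟩, ?_⟩
  · rw [Complex.norm_real, Real.norm_of_nonneg hr0]
  · rintro _ ⟨μ, hμ, rfl⟩
    exact hr (norm_mem_cwSet hA hμ)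

lemma rowSum_eq_of_mem_cwSet (hA : Nonneg A) (hwi : WeaklyIrreducible A) (hs : s ∈ cwSet A)
    (h : ∀ i, rowSum A i ≤ s) (i : Fin n) : rowSum A i = s := by
  obtain ⟨x, hx, hx0, hsub⟩ := hs
  obtain ⟨k, hk⟩ := Function.ne_iff.1 hx0
  have : Nonempty (Fin n) := ⟨k⟩
  obtain ⟨i₀, hi₀⟩ := Finite.exists_max x
  have hM : 0 < x i₀ := ((hx k).lt_of_ne' hk).trans_le (hi₀ k)
  -- no nonzero entry in a row where `x` is maximal reaches a smaller coordinate
  have hconst : ∀ j, x j = x i₀ := by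
    by_contra hne
    obtain ⟨j, hj, t, ⟨q, hq⟩, ht⟩ := hwi.exists_ne_zero (I := {j | x j = x i₀}) ⟨i₀, rfl⟩
      (fun hI => hne fun j => Set.eq_univ_iff_forall.1 hI j)
    have hprod : ∏ q, x (t q) < x i₀ ^ p := by
      simpa using prod_lt_pow_card (f := fun q => x (t q)) (fun _ => hx _) (fun _ => hi₀ _)
        ((hi₀ (t q)).lt_of_ne hq)
    have hlt := realApply_lt_realApply hA hx hi₀ ht (by simpa using hprod)
    rw [realApply_const] at hlt
    have := (hsub j).trans_lt hlt
    rw [show x j = x i₀ from hj] at this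
    exact this.not_ge (mul_le_mul_of_nonneg_right (h j) (pow_nonneg hM.le p))
  refine le_antisymm (h i) (le_of_mul_le_mul_right ?_ (pow_pos hM p))
  calc s * x i₀ ^ p = s * x i ^ p := by rw [hconst i]
    _ ≤ realApply A x i := hsub i
    _ = realApply A (fun _ => x i₀) i := congrArg (realApply A · i) (funext hconst)
    _ = rowSum A i * x i₀ ^ p := realApply_const A _ i

lemma rowSum_eq_of_mem_upperBounds (hA : Nonneg A) (hwi : WeaklyIrreducible A)
    (hs : s ∈ upperBounds (cwSet A)) (h : ∀ i, s ≤ rowSum A i) (i : Fin n) :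
    rowSum A i = s := by
  by_contra hne
  obtain ⟨y, hy, hyA⟩ := exists_forall_lt_of_weaklyIrreducible hA hwi (singleton_nonempty i)
    (x := fun _ => 1) (fun _ => one_pos) (fun k => by simpa [realApply_const] using h k)
    (by simpa [realApply_const] using (h i).lt_of_ne' hne)
  obtain ⟨s', hs', hmem⟩ :=
    exists_gt_mem_cwSet (fun k => (hy k).le) (fun h0 => (hy i).ne' (congrFun h0 i)) hyA
  exact (hs hmem).not_gt hs'

end

end TensorSR

open TensorSR

theorem stmt6 {n m : ℕ} (hn : 0 < n) (hm : 2 ≤ m)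
    (A : Fin n → (Fin (m-1) → Fin n) → ℝ) (hA : Nonneg A) :
    (⨅ i, rowSum A i) ≤ specRad A ∧ specRad A ≤ (⨆ i, rowSum A i) ∧
      (WeaklyIrreducible A →
        ((specRad A = ⨅ i, rowSum A i ∨ specRad A = ⨆ i, rowSum A i) ↔
          ∀ i j : Fin n, rowSum A i = rowSum A j)) := by
  have : NeZero n := ⟨hn.ne'⟩
  obtain ⟨r, x, hx, heig, hr⟩ := exists_perron_eigenpair (by omega : 0 < m - 1) hA
  have hrA : r ∈ cwSet A := mem_cwSet_of_mem_stdSimplex hx fun i => (heig i).ge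
  have hlow : (⨅ i, rowSum A i) ≤ r := hr iInf_rowSum_mem_cwSet
  have hup : r ≤ ⨆ i, rowSum A i := le_iSup_rowSum_of_mem_cwSet hA hrA
  rw [specRad_eq hA hx heig hr]
  refine ⟨hlow, hup, fun hwi => ⟨?_, fun hall => Or.inr (hup.antisymm ?_)⟩⟩
  · rintro (hinf | hsup) i j
    · have hrow := rowSum_eq_of_mem_upperBounds hA hwi hr
        fun k => hinf ▸ ciInf_le (Finite.bddBelow_range _) k
      rw [hrow i, hrow j]
    · have hrow := rowSum_eq_of_mem_cwSet hA hwi hrA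
        fun k => hsup ▸ le_ciSup (Finite.bddAbove_range _) k
      rw [hrow i, hrow j]
  · exact (ciSup_le fun j => le_ciInf fun k => (hall j k).le).trans hlow
end

section
/- With the notation of the bound F(i,j) = (t_i + t_j + √((t_i−t_j)² + 4 S_i S_j /(R_i R_j)^{m−1}))/2 for B = A + diag-tensor(t), if t_i + S_i/R_i^{m−1} is the same constant c for all i ∈ [n], then ρ(B) = c = F(i,j) for every pair i, j ∈ N(i); in particular both bound inequalities become equalities. -/
/-!
Scaling by the positive vector `R` turns `B` into a tensor with constant row sum `c`: indeed
`∑ₜ b_{it} ∏ R_{t_j} = (t_i + S_i / R_i^{m-1}) R_i^{m-1} = c R_i^{m-1}`. Hence `R` is an eigenvector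
for `c`, and at an index maximising `|x_i| / R_i` the eigen-equation of any eigenpair `(λ, x)` forces
`|λ| ≤ c`; so `ρ(B) = c`. For `F`, the radicand equals `(2c - t_i - t_j)²`, because
`S_i / R_i^{m-1} = c - t_i ≥ 0`.
-/

open scoped BigOperators

namespace TensorSR

variable {n p : ℕ}

def weightedRowSum (B : Fin n → (Fin p → Fin n) → ℝ) (R : Fin n → ℝ) (i : Fin n) : ℝ :=
  ∑ t : Fin p → Fin n, B i t * ∏ j, R (t j)

lemma tApply_ofReal (B : Fin n → (Fin p → Fin n) → ℝ) (R : Fin n → ℝ) (i : Fin n) :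
    tApply B (fun k => (R k : ℂ)) i = weightedRowSum B R i := by
  simp only [tApply, weightedRowSum]
  push_cast
  rfl

lemma isEigenvalue_of_weightedRowSum_eq {B : Fin n → (Fin p → Fin n) → ℝ} {R : Fin n → ℝ} {c : ℝ}
    (hn : 0 < n) (hR : ∀ i, 0 < R i) (hrow : ∀ i, weightedRowSum B R i = c * R i ^ p) :
    IsEigenvalue B c := by
  refine ⟨fun k => (R k : ℂ), fun h => ?_, fun i => ?_⟩
  · have h0 := congrFun h ⟨0, hn⟩
    simp only [Pi.zero_apply, Complex.ofReal_eq_zero] at h0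
    exact (hR ⟨0, hn⟩).ne' h0
  · rw [tApply_ofReal, hrow]
    push_cast
    rfl

lemma weightedRowSum_nonneg {B : Fin n → (Fin p → Fin n) → ℝ} {R : Fin n → ℝ}
    (hB : Nonneg B) (hR : ∀ i, 0 ≤ R i) (i : Fin n) : 0 ≤ weightedRowSum B R i :=
  Finset.sum_nonneg fun t _ => mul_nonneg (hB i t) (Finset.prod_nonneg fun j _ => hR (t j))

lemma norm_le_of_isEigenvalue {B : Fin n → (Fin p → Fin n) → ℝ} {R : Fin n → ℝ} {c : ℝ}
    (hB : Nonneg B) (hR : ∀ i, 0 < R i) (hrow : ∀ i, weightedRowSum B R i = c * R i ^ p)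
    {lam : ℂ} (hlam : IsEigenvalue B lam) : ‖lam‖ ≤ c := by
  obtain ⟨x, hx0, hx⟩ := hlam
  obtain ⟨k, hk⟩ : ∃ k, x k ≠ 0 := by
    by_contra! h
    exact hx0 (funext h)
  obtain ⟨i, -, hi⟩ := Finset.exists_max_image Finset.univ (fun k => ‖x k‖ / R k)
    ⟨k, Finset.mem_univ k⟩
  set g := ‖x i‖ / R i
  have hg : 0 < g :=
    (div_pos (norm_pos_iff.mpr hk) (hR k)).trans_le (hi k (Finset.mem_univ k))
  have hxg : ∀ k, ‖x k‖ ≤ g * R k := fun k =>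
    (div_le_iff₀ (hR k)).mp (hi k (Finset.mem_univ k))
  have hxi : ‖x i‖ = g * R i := (div_mul_cancel₀ _ (hR i).ne').symm
  have hgR : 0 < (g * R i) ^ p := pow_pos (mul_pos hg (hR i)) p
  have key : ‖lam‖ * (g * R i) ^ p ≤ c * (g * R i) ^ p :=
    calc ‖lam‖ * (g * R i) ^ p = ‖tApply B x i‖ := by rw [hx i, norm_mul, norm_pow, hxi]
      _ ≤ ∑ t : Fin p → Fin n, ‖(B i t : ℂ) * ∏ j, x (t j)‖ := norm_sum_le _ _
      _ ≤ ∑ t : Fin p → Fin n, B i t * ∏ j, g * R (t j) := by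
          gcongr with t
          rw [norm_mul, Complex.norm_of_nonneg (hB i t), norm_prod]
          gcongr with j
          · exact hB i t
          · exact hxg (t j)
      _ = g ^ p * weightedRowSum B R i := by
          simp only [weightedRowSum, Finset.prod_mul_distrib, Finset.prod_const, Finset.card_univ,
            Fintype.card_fin, Finset.mul_sum]
          exact Finset.sum_congr rfl fun t _ => by ring
      _ = c * (g * R i) ^ p := by rw [hrow, mul_pow]; ring
  exact le_of_mul_le_mul_right key hgR

theorem specRad_eq_of_weightedRowSum_eq {B : Fin n → (Fin p → Fin n) → ℝ} {R : Fin n → ℝ}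
    {c : ℝ} (hn : 0 < n) (hB : Nonneg B) (hR : ∀ i, 0 < R i)
    (hrow : ∀ i, weightedRowSum B R i = c * R i ^ p) : specRad B = c := by
  have hc : 0 ≤ c := by
    have h := weightedRowSum_nonneg hB (fun i => (hR i).le) ⟨0, hn⟩
    rw [hrow] at h
    exact nonneg_of_mul_nonneg_left h (pow_pos (hR _) p)
  have hbdd : ∀ r ∈ {r : ℝ | ∃ lam : ℂ, IsEigenvalue B lam ∧ r = ‖lam‖}, r ≤ c := by
    rintro r ⟨lam, hlam, rfl⟩
    exact norm_le_of_isEigenvalue hB hR hrow hlam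
  refine le_antisymm (Real.sSup_le hbdd hc) (le_csSup ⟨c, hbdd⟩ ?_)
  exact ⟨c, isEigenvalue_of_weightedRowSum_eq hn hR hrow, (Complex.norm_of_nonneg hc).symm⟩

lemma weightedRowSum_add_diagonal {A B : Fin n → (Fin p → Fin n) → ℝ} {d : Fin n → ℝ}
    (hB : ∀ i t, B i t = A i t + if ∀ q, t q = i then d i else 0) (R : Fin n → ℝ) (i : Fin n) :
    weightedRowSum B R i = weightedRowSum A R i + d i * R i ^ p := by
  have hdiag : ∀ t : Fin p → Fin n, (∀ q, t q = i) ↔ t = fun _ => i := fun _ => funext_iff.symm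
  simp only [weightedRowSum, hB, hdiag, add_mul, Finset.sum_add_distrib, ite_mul, zero_mul,
    Finset.sum_ite_eq', Finset.mem_univ, if_true, Finset.prod_const, Finset.card_univ,
    Fintype.card_fin]

end TensorSR

lemma add_add_sqrt_div_two_eq {a b u v c : ℝ} (hu : 0 ≤ u) (hv : 0 ≤ v)
    (ha : a + u = c) (hb : b + v = c) :
    (a + b + Real.sqrt ((a - b) ^ 2 + 4 * u * v)) / 2 = c := by
  have hsq : (a - b) ^ 2 + 4 * u * v = (u + v) ^ 2 := by
    rw [← sub_eq_of_eq_add' ha.symm, ← sub_eq_of_eq_add' hb.symm]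
    ring
  rw [hsq, Real.sqrt_sq (add_nonneg hu hv)]
  linarith

open TensorSR

theorem stmt8_general {n m : ℕ} (hn : 0 < n)
    (A : Fin n → (Fin (m-1) → Fin n) → ℝ)
    (hA : Nonneg A)
    (R : Fin n → ℝ) (hR : ∀ i, 0 < R i)
    (tt : Fin n → ℝ) (htt : ∀ i, 0 ≤ tt i)
    (S : Fin n → ℝ) (hS : ∀ i, S i = ∑ t : Fin (m-1) → Fin n, A i t * ∏ j, R (t j))
    (B : Fin n → (Fin (m-1) → Fin n) → ℝ)
    (hB : ∀ i t, B i t = A i t + if (∀ q, t q = i) then tt i else 0)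
    (F : Fin n → Fin n → ℝ)
    (hF : ∀ i j, F i j =
      (tt i + tt j + Real.sqrt ((tt i - tt j) ^ 2 + 4 * S i * S j / (R i * R j) ^ (m-1))) / 2)
    (c : ℝ) (hc : ∀ i, tt i + S i / R i ^ (m-1) = c) :
    specRad B = c ∧ ∀ i j : Fin n, Nbr A i j → F i j = c := by
  have hRp : ∀ i, 0 < R i ^ (m-1) := fun i => pow_pos (hR i) _
  have hBnn : Nonneg B := fun i t => by
    rw [hB]
    exact add_nonneg (hA i t) (by split_ifs <;> simp [htt i])
  have hscaled : ∀ i, 0 ≤ S i / R i ^ (m-1) := fun i =>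
    div_nonneg ((hS i).symm ▸ weightedRowSum_nonneg hA (fun k => (hR k).le) i) (hRp i).le
  have hrow : ∀ i, weightedRowSum B R i = c * R i ^ (m-1) := fun i => by
    rw [weightedRowSum_add_diagonal hB, weightedRowSum, ← hS, ← hc i, add_mul,
      div_mul_cancel₀ _ (hRp i).ne']
    ring
  refine ⟨specRad_eq_of_weightedRowSum_eq hn hBnn hR hrow, fun i j _ => ?_⟩
  rw [hF, mul_pow, mul_assoc 4, mul_div_assoc, ← div_mul_div_comm, ← mul_assoc]
  exact add_add_sqrt_div_two_eq (hscaled i) (hscaled j) (hc i) (hc j)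

theorem stmt8 {n m : ℕ} (hn : 0 < n) (hm : 2 ≤ m)
    (A : Fin n → (Fin (m-1) → Fin n) → ℝ)
    (hA : Nonneg A) (hirr : WeaklyIrreducible A)
    (hdiag : ∀ i, A i (fun _ => i) = 0)
    (R : Fin n → ℝ) (hR : ∀ i, 0 < R i)
    (tt : Fin n → ℝ) (htt : ∀ i, 0 ≤ tt i)
    (S : Fin n → ℝ) (hS : ∀ i, S i = ∑ t : Fin (m-1) → Fin n, A i t * ∏ j, R (t j))
    (B : Fin n → (Fin (m-1) → Fin n) → ℝ)
    (hB : ∀ i t, B i t = A i t + if (∀ q, t q = i) then tt i else 0)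
    (F : Fin n → Fin n → ℝ)
    (hF : ∀ i j, F i j =
      (tt i + tt j + Real.sqrt ((tt i - tt j) ^ 2 + 4 * S i * S j / (R i * R j) ^ (m-1))) / 2)
    (c : ℝ) (hc : ∀ i, tt i + S i / R i ^ (m-1) = c) :
    specRad B = c ∧ ∀ i j : Fin n, Nbr A i j → F i j = c :=
  stmt8_general hn A hA R hR tt htt S hS B hB F hF c hc
end

section
/- Let k ≥ 3 and H be a connected k-uniform hypergraph with degrees d_i. Then min over edges e and pairs {i,j} ⊆ e of √(d_i d_j) ≤ ρ(A(H)) ≤ max over edges e and pairs {i,j} ⊆ e of √(d_i d_j), with equality on either side if and only if H is regular. -/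
open scoped BigOperators

open TensorSR

namespace HypSR

variable {n k : ℕ}

/-- Connectivity of a hypergraph with edge set `E`: every two vertices are
joined by a walk. -/
def HConnected (E : Finset (Finset (Fin n))) : Prop :=
  ∀ u v : Fin n,
    Relation.ReflTransGen (fun a b : Fin n => ∃ e ∈ E, a ∈ e ∧ b ∈ e) u v

/-- Degree of a vertex. -/
def deg (E : Finset (Finset (Fin n))) (i : Fin n) : ℕ :=
  (E.filter (fun e => i ∈ e)).card

/-- The adjacency tensor of a `k`-uniform hypergraph: order `k`, dimension `n`,
entry `1/(k-1)!` at `(i₁,…,i_k)` when `{i₁,…,i_k}` is an edge, and `0` otherwise. -/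
noncomputable def adjT (E : Finset (Finset (Fin n))) (k : ℕ) :
    Fin n → (Fin (k-1) → Fin n) → ℝ :=
  fun i t =>
    if insert i (Finset.image t Finset.univ) ∈ E then ((k-1).factorial : ℝ)⁻¹ else 0

/-- The signless Laplacian tensor `Q = D + A`. -/
noncomputable def signlessT (E : Finset (Finset (Fin n))) (k : ℕ) :
    Fin n → (Fin (k-1) → Fin n) → ℝ :=
  fun i t => adjT E k i t + if (∀ q, t q = i) then (deg E i : ℝ) else 0

end HypSR

open HypSR

/-!
Maximising `∑_{e ∈ E} ∏_{v ∈ e} x_v` on the nonnegative unit `ℓ^k`-sphere yields a Perron vector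
`x > 0` with `A(H) x^{k-1} = ρ x^{[k-1]}`, and a Collatz–Wielandt comparison shows that no
eigenvalue is larger in modulus, so `ρ(A(H)) = ρ`.

Let `i` maximise `x` and `j` maximise `x` among the neighbours of `i`. The eigen-equations at `i`
and `j` give `ρ x_i^{k-1} ≤ d_i x_j^{k-1}` and `ρ x_j^{k-1} ≤ d_j x_i^{k-1}`, hence `ρ² ≤ d_i d_j`;
minima give the lower bound in the same way. If `ρ` attains a bound, both inequalities are tight
at every extremal vertex, so `x` is constant on the neighbourhoods of `i` and of `j`, and a third
vertex of an edge through `i` and `j` (here `k ≥ 3` is used) forces `x_j = x_i`. By connectivity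
`x` is then constant, and the eigen-equations read `d_i = ρ`.
-/

namespace HypSR

open Finset Function

variable {n k : ℕ} {E : Finset (Finset (Fin n))}

def link (E : Finset (Finset (Fin n))) (i : Fin n) : Finset (Fin n) :=
  (E.filter (i ∈ ·)).biUnion (·.erase i)

/-- The `i`-th entry of `A(H) x^{k-1}`. -/
def linkSum {R : Type*} [CommSemiring R] (E : Finset (Finset (Fin n))) (i : Fin n)
    (x : Fin n → R) : R :=
  ∑ e ∈ E.filter (i ∈ ·), ∏ v ∈ e.erase i, x v

theorem mem_link {i w : Fin n} : w ∈ link E i ↔ w ≠ i ∧ ∃ e ∈ E, i ∈ e ∧ w ∈ e := by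
  simp only [link, mem_biUnion, mem_filter, mem_erase]
  aesop

theorem mem_link_of_mem {i w : Fin n} {e : Finset (Fin n)} (he : e ∈ E.filter (i ∈ ·))
    (hw : w ∈ e.erase i) : w ∈ link E i :=
  mem_biUnion.2 ⟨e, he, hw⟩

theorem card_erase_of_mem_filter (hunif : ∀ e ∈ E, #e = k) {i : Fin n} {e : Finset (Fin n)}
    (he : e ∈ E.filter (i ∈ ·)) : #(e.erase i) = k - 1 := by
  rw [mem_filter] at he
  rw [card_erase_of_mem he.2, hunif e he.1]

section LinkSum

variable {R : Type*} [CommSemiring R]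

theorem linkSum_const (hunif : ∀ e ∈ E, #e = k) (i : Fin n) (a : R) :
    linkSum E i (fun _ => a) = deg E i * a ^ (k - 1) := by
  rw [linkSum, deg, ← nsmul_eq_mul, ← sum_const]
  exact sum_congr rfl fun e he => by rw [prod_const, card_erase_of_mem_filter hunif he]

theorem linkSum_const_mul (hunif : ∀ e ∈ E, #e = k) (i : Fin n) (c : R) (x : Fin n → R) :
    linkSum E i (fun v => c * x v) = c ^ (k - 1) * linkSum E i x := by
  rw [linkSum, linkSum, mul_sum]
  exact sum_congr rfl fun e he => by
    rw [prod_mul_distrib, prod_const, card_erase_of_mem_filter hunif he]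

theorem map_linkSum {S : Type*} [CommSemiring S] (f : R →+* S) (i : Fin n) (x : Fin n → R) :
    f (linkSum E i x) = linkSum E i (f ∘ x) := by
  simp [linkSum, map_sum, map_prod]

end LinkSum

theorem norm_linkSum_le {𝕜 : Type*} [NormedField 𝕜] (i : Fin n) (y : Fin n → 𝕜) :
    ‖linkSum E i y‖ ≤ linkSum E i (‖y ·‖) :=
  (norm_sum_le _ _).trans_eq (sum_congr rfl fun _ _ => norm_prod _ _)

theorem linkSum_le_linkSum {i : Fin n} {x y : Fin n → ℝ} (hx : ∀ w ∈ link E i, 0 ≤ x w)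
    (hxy : ∀ w ∈ link E i, x w ≤ y w) : linkSum E i x ≤ linkSum E i y :=
  sum_le_sum fun _ he => prod_le_prod (fun _ hw => hx _ (mem_link_of_mem he hw))
    fun _ hw => hxy _ (mem_link_of_mem he hw)

theorem eq_of_linkSum_eq {i : Fin n} {x y : Fin n → ℝ} (hx : ∀ w ∈ link E i, 0 < x w)
    (hxy : ∀ w ∈ link E i, x w ≤ y w) (heq : linkSum E i x = linkSum E i y) :
    ∀ w ∈ link E i, x w = y w := by
  by_contra! hne
  obtain ⟨w, hw, hlt⟩ : ∃ w ∈ link E i, x w < y w :=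
    let ⟨w, hw, hne⟩ := hne; ⟨w, hw, (hxy w hw).lt_of_ne hne⟩
  obtain ⟨e, he, hwe⟩ := mem_biUnion.1 hw
  refine heq.not_lt (sum_lt_sum (fun _ he' => ?_) ⟨e, he, ?_⟩)
  · exact prod_le_prod (fun _ hv => (hx _ (mem_link_of_mem he' hv)).le)
      fun _ hv => hxy _ (mem_link_of_mem he' hv)
  · exact prod_lt_prod (fun _ hv => hx _ (mem_link_of_mem he hv))
      (fun _ hv => hxy _ (mem_link_of_mem he hv)) ⟨w, hwe, hlt⟩

theorem HConnected.exists_edge_crossing (hconn : HConnected E) {p : Fin n → Prop} {a b : Fin n}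
    (ha : p a) (hb : ¬ p b) : ∃ e ∈ E, ∃ u ∈ e, ∃ v ∈ e, p u ∧ ¬ p v := by
  induction hconn a b with
  | refl => exact absurd ha hb
  | @tail c d _ hcd ih =>
    obtain ⟨e, he, hc, hd⟩ := hcd
    by_cases hpc : p c
    · exact ⟨e, he, c, hc, d, hd, hpc, hb⟩
    · exact ih hpc

theorem HConnected.forall_of_link_closed (hconn : HConnected E) {p : Fin n → Prop} {a : Fin n}
    (ha : p a) (hclosed : ∀ v, p v → ∀ w ∈ link E v, p w) (b : Fin n) : p b := by
  by_contra hb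
  obtain ⟨e, he, u, hu, v, hv, hpu, hpv⟩ := hconn.exists_edge_crossing ha hb
  have hvu : v ≠ u := fun h => hpv (h ▸ hpu)
  exact hpv (hclosed u hpu v (mem_link.2 ⟨hvu, e, he, hu, hv⟩))

theorem HConnected.link_nonempty (hconn : HConnected E) (hunif : ∀ e ∈ E, #e = k) (hk : 2 ≤ k)
    (hE : E.Nonempty) (i : Fin n) : (link E i).Nonempty := by
  obtain ⟨e₀, he₀⟩ := hE
  obtain ⟨u, hu⟩ : e₀.Nonempty := card_pos.1 (by rw [hunif e₀ he₀]; omega)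
  obtain ⟨e, he, hie⟩ : ∃ e ∈ E, i ∈ e := by
    by_contra hi
    obtain ⟨e, he, -, -, v, hv, -, hv'⟩ :=
      hconn.exists_edge_crossing (p := fun v => ∃ e ∈ E, v ∈ e) ⟨e₀, he₀, hu⟩ hi
    exact hv' ⟨e, he, hv⟩
  obtain ⟨w, hw, hwi⟩ := exists_mem_ne (by rw [hunif e he]; omega) i
  exact ⟨w, mem_link.2 ⟨hwi, e, he, hie, hw⟩⟩

theorem injective_of_image_eq {α : Type*} [DecidableEq α] {p : ℕ} {s : Finset α}
    (hs : #s = p) {t : Fin p → α} (ht : image t univ = s) : Injective t := by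
  intro a b hab
  refine injOn_of_card_image_eq ?_ (mem_univ a) (mem_univ b) hab
  rw [ht, hs, card_univ, Fintype.card_fin]

theorem card_filter_image_eq {α : Type*} [DecidableEq α] [Fintype α] {p : ℕ} {s : Finset α}
    (hs : #s = p) : #{t : Fin p → α | image t univ = s} = p.factorial := by
  have hmem (t : Fin p → α) (ht : image t univ = s) (j : Fin p) : t j ∈ s :=
    ht ▸ mem_image_of_mem t (mem_univ j)
  let e : {t : Fin p → α // image t univ = s} ≃ (Fin p ≃ s) :=
    { toFun := fun t => Equiv.ofBijective (fun j => ⟨t.1 j, hmem t.1 t.2 j⟩) <| by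
        refine (Fintype.bijective_iff_injective_and_card _).2 ⟨fun a b hab => ?_, by simp [hs]⟩
        exact injective_of_image_eq hs t.2 (congrArg Subtype.val hab)
      invFun := fun σ => ⟨fun j => σ j, by
        ext v
        simp only [mem_image, mem_univ, true_and]
        exact ⟨fun ⟨j, hj⟩ => hj ▸ (σ j).2, fun hv => ⟨σ.symm ⟨v, hv⟩, by simp⟩⟩⟩
      left_inv := fun _ => rfl
      right_inv := fun _ => by ext; rfl }
  rw [← Fintype.card_subtype, Fintype.card_congr e,
    Fintype.card_equiv ((s.equivFinOfCardEq hs).symm), Fintype.card_fin]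

theorem insert_image_eq_iff {α : Type*} [DecidableEq α] {e : Finset α} (he : #e = k) {i : α}
    (hi : i ∈ e) (t : Fin (k - 1) → α) :
    insert i (image t univ) = e ↔ image t univ = e.erase i := by
  constructor
  · rintro rfl
    have hcard : #(image t univ) < #(insert i (image t univ)) := by
      have := card_image_le (s := univ) (f := t)
      rw [card_univ, Fintype.card_fin] at this
      have : 0 < #(insert i (image t univ)) := card_pos.2 (insert_nonempty _ _)
      omega
    rw [erase_insert fun hi' => hcard.ne (by rw [insert_eq_of_mem hi'])]
  · intro h
    rw [h, insert_erase hi]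

/-- Each edge `e ∋ i` is produced by exactly `(k-1)!` tails `t`, each contributing
`∏_{v ∈ e \ {i}} y_v / (k-1)!`. -/
theorem tApply_adjT (hunif : ∀ e ∈ E, #e = k) (y : Fin n → ℂ) (i : Fin n) :
    tApply (adjT E k) y i = linkSum E i y := by
  set c : ℂ := ((k - 1).factorial : ℂ)⁻¹
  have hterm (t : Fin (k - 1) → Fin n) : ((adjT E k i t : ℝ) : ℂ) * ∏ j, y (t j) =
      if insert i (image t univ) ∈ E then c * ∏ j, y (t j) else 0 := by
    simp only [adjT, c]; split_ifs <;> simp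
  rw [tApply, sum_congr rfl fun t _ => hterm t, ← sum_filter,
    ← sum_fiberwise_of_maps_to (g := fun t => insert i (image t univ)) (t := E.filter (i ∈ ·))
      (fun t ht => mem_filter.2 ⟨(mem_filter.1 ht).2, mem_insert_self _ _⟩)]
  refine sum_congr rfl fun e he => ?_
  have hek : #e = k := hunif e (mem_filter.1 he).1
  have hie : i ∈ e := (mem_filter.1 he).2
  have hfib : ((univ.filter fun t : Fin (k - 1) → Fin n => insert i (image t univ) ∈ E).filter
      fun t => insert i (image t univ) = e) = univ.filter fun t => image t univ = e.erase i := by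
    ext t
    simp only [mem_filter, mem_univ, true_and, ← insert_image_eq_iff hek hie]
    exact ⟨And.right, fun h => ⟨h ▸ (mem_filter.1 he).1, h⟩⟩
  have herase : #(e.erase i) = k - 1 := by rw [card_erase_of_mem hie, hek]
  have hprod (t : Fin (k - 1) → Fin n) (ht : t ∈ univ.filter fun t => image t univ = e.erase i) :
      c * ∏ j, y (t j) = c * ∏ v ∈ e.erase i, y v := by
    have ht := (mem_filter.1 ht).2
    rw [← ht, prod_image fun a _ b _ hab => injective_of_image_eq herase ht hab]
  rw [hfib, sum_congr rfl hprod, sum_const, card_filter_image_eq herase, nsmul_eq_mul,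
    ← mul_assoc, mul_inv_cancel₀ (by exact_mod_cast (k - 1).factorial_ne_zero), one_mul]

theorem isEigenvalue_adjT_of_pos (hn : 0 < n) (hunif : ∀ e ∈ E, #e = k) {r : ℝ}
    {x : Fin n → ℝ} (hx : ∀ i, 0 < x i) (heig : ∀ i, linkSum E i x = r * x i ^ (k - 1)) :
    IsEigenvalue (adjT E k) r := by
  refine ⟨fun v => x v, fun h => (hx ⟨0, hn⟩).ne' ?_, fun i => ?_⟩
  · exact Complex.ofReal_eq_zero.1 (congrFun h ⟨0, hn⟩)
  · rw [tApply_adjT hunif]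
    change linkSum E i (Complex.ofRealHom ∘ x) = _
    rw [← map_linkSum, heig]
    simp

/-- A Collatz–Wielandt bound: compare an eigenvector `y` with `t • x` at a vertex where
`‖y_v‖ / x_v` is maximal. -/
theorem norm_le_of_isEigenvalue_adjT (hunif : ∀ e ∈ E, #e = k) {r : ℝ} {x : Fin n → ℝ}
    (hx : ∀ i, 0 < x i) (heig : ∀ i, linkSum E i x = r * x i ^ (k - 1)) {μ : ℂ}
    (hμ : IsEigenvalue (adjT E k) μ) : ‖μ‖ ≤ r := by
  obtain ⟨y, hy0, hy⟩ := hμ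
  obtain ⟨v, hv⟩ : ∃ v, y v ≠ 0 := Function.ne_iff.1 hy0
  obtain ⟨j, -, hj⟩ := exists_max_image univ (fun v => ‖y v‖ / x v) ⟨v, mem_univ v⟩
  set t := ‖y j‖ / x j
  have hyt (w : Fin n) : ‖y w‖ ≤ t * x w := (div_le_iff₀ (hx w)).1 (hj w (mem_univ w))
  have hyj : ‖y j‖ = t * x j := (div_mul_cancel₀ _ (hx j).ne').symm
  have ht : 0 < t := (div_pos (norm_pos_iff.2 hv) (hx v)).trans_le (hj v (mem_univ v))
  have key : ‖μ‖ * ‖y j‖ ^ (k - 1) ≤ r * ‖y j‖ ^ (k - 1) := calc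
    ‖μ‖ * ‖y j‖ ^ (k - 1) = ‖linkSum E j y‖ := by
      rw [← tApply_adjT hunif, hy j, norm_mul, norm_pow]
    _ ≤ linkSum E j (‖y ·‖) := norm_linkSum_le j y
    _ ≤ linkSum E j (fun w => t * x w) :=
      linkSum_le_linkSum (fun _ _ => norm_nonneg _) fun w _ => hyt w
    _ = r * ‖y j‖ ^ (k - 1) := by rw [linkSum_const_mul hunif, heig, hyj, mul_pow]; ring
  exact le_of_mul_le_mul_right key (pow_pos (hyj ▸ mul_pos ht (hx j)) _)

theorem specRad_adjT_eq (hn : 0 < n) (hunif : ∀ e ∈ E, #e = k) {r : ℝ} {x : Fin n → ℝ}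
    (hr : 0 ≤ r) (hx : ∀ i, 0 < x i) (heig : ∀ i, linkSum E i x = r * x i ^ (k - 1)) :
    specRad (adjT E k) = r := by
  refine IsGreatest.csSup_eq ⟨⟨r, isEigenvalue_adjT_of_pos hn hunif hx heig, ?_⟩, ?_⟩
  · rw [Complex.norm_of_nonneg hr]
  · rintro _ ⟨μ, hμ, rfl⟩
    exact norm_le_of_isEigenvalue_adjT hunif hx heig hμ

def edgePoly (E : Finset (Finset (Fin n))) (x : Fin n → ℝ) : ℝ :=
  ∑ e ∈ E, ∏ v ∈ e, x v

def nonnegSphere (n k : ℕ) : Set (Fin n → ℝ) :=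
  {y | (∀ i, 0 ≤ y i) ∧ ∑ i, y i ^ k = 1}

theorem isCompact_nonnegSphere (hk : k ≠ 0) : IsCompact (nonnegSphere n k) := by
  refine (isCompact_univ_pi fun _ => isCompact_Icc (a := (0 : ℝ)) (b := 1)).of_isClosed_subset
    ((isClosed_le continuous_const continuous_id).inter
      (isClosed_eq (by fun_prop) continuous_const)) fun y hy i _ => ⟨hy.1 i, ?_⟩
  refine (pow_le_one_iff_of_nonneg (hy.1 i) hk).1 ?_
  exact hy.2 ▸ single_le_sum (fun j _ => pow_nonneg (hy.1 j) k) (mem_univ i)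

theorem exists_isMaxOn_edgePoly (hn : 0 < n) (hk : k ≠ 0) (E : Finset (Finset (Fin n))) :
    ∃ x ∈ nonnegSphere n k, IsMaxOn (edgePoly E) (nonnegSphere n k) x := by
  refine (isCompact_nonnegSphere hk).exists_isMaxOn ⟨Pi.single ⟨0, hn⟩ 1, fun i => ?_, ?_⟩
    (by unfold edgePoly; fun_prop)
  · by_cases h : i = ⟨0, hn⟩ <;> simp [h]
  · simp [Pi.single_apply, apply_ite (· ^ k), zero_pow hk]

theorem edgePoly_const_mul (hunif : ∀ e ∈ E, #e = k) (c : ℝ) (y : Fin n → ℝ) :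
    edgePoly E (fun v => c * y v) = c ^ k * edgePoly E y := by
  rw [edgePoly, edgePoly, mul_sum]
  exact sum_congr rfl fun e he => by rw [prod_mul_distrib, prod_const, hunif e he]

/-- Rescale `y` onto the sphere: `edgePoly E` is homogeneous of degree `k`. -/
theorem edgePoly_le_of_isMaxOn (hunif : ∀ e ∈ E, #e = k) (hk : k ≠ 0) {x : Fin n → ℝ}
    (hmax : IsMaxOn (edgePoly E) (nonnegSphere n k) x) {y : Fin n → ℝ} (hy : ∀ i, 0 ≤ y i)
    (hT : 0 < ∑ i, y i ^ k) : edgePoly E y ≤ edgePoly E x * ∑ i, y i ^ k := by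
  set T := ∑ i, y i ^ k
  set s := (T ^ ((k : ℝ)⁻¹))⁻¹
  have hs : s ^ k = T⁻¹ := by rw [inv_pow, Real.rpow_inv_natCast_pow hT.le hk]
  have hsy : (fun i => s * y i) ∈ nonnegSphere n k := by
    refine ⟨fun i => mul_nonneg (by positivity) (hy i), ?_⟩
    simp_rw [mul_pow]
    rw [← mul_sum, hs, inv_mul_cancel₀ hT.ne']
  have h : edgePoly E (fun i => s * y i) ≤ edgePoly E x := hmax hsy
  rw [edgePoly_const_mul hunif, hs, inv_mul_le_iff₀ hT] at h
  linarith

theorem edgePoly_add_prod_le {x y : Fin n → ℝ} (hx : ∀ v, 0 ≤ x v) (hxy : ∀ v, x v ≤ y v)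
    {e₀ : Finset (Fin n)} (he₀ : e₀ ∈ E) :
    edgePoly E x + ∏ v ∈ e₀, y v ≤ edgePoly E y + ∏ v ∈ e₀, x v := by
  rw [edgePoly, edgePoly, ← add_sum_erase E _ he₀, ← add_sum_erase E _ he₀]
  have : ∑ e ∈ E.erase e₀, ∏ v ∈ e, x v ≤ ∑ e ∈ E.erase e₀, ∏ v ∈ e, y v :=
    sum_le_sum fun e _ => prod_le_prod (fun v _ => hx v) fun v _ => hxy v
  linarith

theorem sum_max_pow_le {x : Fin n → ℝ} (hx : ∀ v, 0 ≤ x v) {ε : ℝ} (hε : 0 ≤ ε) (k : ℕ) :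
    ∑ v, max (x v) ε ^ k ≤ ∑ v, x v ^ k + n * ε ^ k := by
  calc ∑ v, max (x v) ε ^ k ≤ ∑ v, (x v ^ k + ε ^ k) := sum_le_sum fun v _ => by
        rcases le_total (x v) ε with h | h
        · simpa [max_eq_right h] using pow_nonneg (hx v) k
        · simpa [max_eq_left h] using pow_nonneg hε k
    _ = ∑ v, x v ^ k + n * ε ^ k := by simp [sum_add_distrib]

/-- If some `x_b` vanished, raising every coordinate to at least `ε` would gain order `ε^{k-1}`
on an edge joining a zero to a nonzero coordinate, while costing only order `ε^k` in norm. -/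
theorem pos_of_isMaxOn (hconn : HConnected E) (hunif : ∀ e ∈ E, #e = k) (hk : k ≠ 0)
    {x : Fin n → ℝ} (hxS : x ∈ nonnegSphere n k) (hmax : IsMaxOn (edgePoly E) (nonnegSphere n k) x)
    (i : Fin n) : 0 < x i := by
  by_contra! hi
  obtain ⟨a₀, ha₀⟩ : ∃ a, x a ≠ 0 := by
    by_contra! h0
    simpa [h0, zero_pow hk] using hxS.2
  obtain ⟨e₀, he₀, a, ha, b, hb, hxa, hxb⟩ :=
    hconn.exists_edge_crossing (p := fun v => x v ≠ 0) ha₀ (not_not.2 (hi.antisymm (hxS.1 i)))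
  replace hxa : 0 < x a := (hxS.1 a).lt_of_ne' hxa
  set lam := edgePoly E x
  have hlam : 0 ≤ lam := sum_nonneg fun e _ => prod_nonneg fun v _ => hxS.1 v
  set ε := x a / (lam * n + 1)
  have hε : 0 < ε := by positivity
  set y : Fin n → ℝ := fun v => max (x v) ε
  have hxy (v : Fin n) : x v ≤ y v := le_max_left _ _
  have hgain : lam + x a * ε ^ (k - 1) ≤ edgePoly E y := by
    have hedge : x a * ε ^ (k - 1) ≤ ∏ v ∈ e₀, y v := by
      have hcard : #(e₀.erase a) = k - 1 := by rw [card_erase_of_mem ha, hunif e₀ he₀]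
      rw [← mul_prod_erase e₀ y ha, ← hcard, ← prod_const]
      exact mul_le_mul (hxy a) (prod_le_prod (fun _ _ => hε.le) fun _ _ => le_max_right _ _)
        (by positivity) (hxa.le.trans (hxy a))
    have := edgePoly_add_prod_le hxS.1 hxy he₀
    rw [prod_eq_zero hb (not_not.1 hxb)] at this
    linarith
  have hcost := sum_max_pow_le hxS.1 hε.le k
  rw [hxS.2] at hcost
  have hnorm : 1 ≤ ∑ v, y v ^ k :=
    hxS.2 ▸ sum_le_sum fun v _ => pow_le_pow_left₀ (hxS.1 v) (hxy v) k
  have hbound := edgePoly_le_of_isMaxOn hunif hk hmax (fun v => (hxS.1 v).trans (hxy v))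
    (one_pos.trans_le hnorm)
  have hk' : ε ^ k = ε * ε ^ (k - 1) := by rw [← pow_succ', Nat.sub_add_cancel (by omega)]
  have : x a * ε ^ (k - 1) ≤ lam * n * ε * ε ^ (k - 1) := by
    have := mul_le_mul_of_nonneg_left hcost hlam
    rw [hk'] at this
    linarith
  have : x a ≤ lam * n * ε := le_of_mul_le_mul_right this (by positivity)
  have : lam * n * ε < x a := by
    rw [mul_div_assoc', div_lt_iff₀ (by positivity)]; nlinarith
  linarith

theorem edgePoly_update (i : Fin n) (x : Fin n → ℝ) (t : ℝ) :
    edgePoly E (update x i t) = t * linkSum E i x + ∑ e ∈ E.filter (i ∉ ·), ∏ v ∈ e, x v := by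
  rw [edgePoly, ← sum_filter_add_sum_filter_not E (i ∈ ·), linkSum, mul_sum]
  congr 1
  · exact sum_congr rfl fun e he => by
      rw [prod_update_of_mem (mem_filter.1 he).2, sdiff_singleton_eq_erase]
  · exact sum_congr rfl fun e he => prod_update_of_notMem (mem_filter.1 he).2 _ _

theorem sum_pow_update (i : Fin n) (x : Fin n → ℝ) (t : ℝ) :
    ∑ j, update x i t j ^ k = t ^ k + ∑ j ∈ univ.erase i, x j ^ k := by
  rw [← add_sum_erase _ _ (mem_univ i), update_self]
  exact congrArg _ (sum_congr rfl fun j hj => by rw [update_of_ne (ne_of_mem_erase hj)])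

/-- At a positive maximiser, `y ↦ λ ∑ y_j^k - edgePoly E y` has a local minimum (zero) in each
coordinate direction; its vanishing partial derivatives are the eigen-equations. -/
theorem linkSum_eq_of_isMaxOn (hunif : ∀ e ∈ E, #e = k) (hk : k ≠ 0) {x : Fin n → ℝ}
    (hxS : x ∈ nonnegSphere n k) (hmax : IsMaxOn (edgePoly E) (nonnegSphere n k) x)
    (hx : ∀ i, 0 < x i) (i : Fin n) :
    linkSum E i x = k * edgePoly E x * x i ^ (k - 1) := by
  set lam := edgePoly E x
  set ψ : ℝ → ℝ := fun t =>
    lam * (t ^ k + ∑ j ∈ univ.erase i, x j ^ k) -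
      (t * linkSum E i x + ∑ e ∈ E.filter (i ∉ ·), ∏ v ∈ e, x v)
  have hψ (t : ℝ) : ψ t = lam * ∑ j, update x i t j ^ k - edgePoly E (update x i t) := by
    rw [sum_pow_update, edgePoly_update]
  have hmin : IsLocalMin ψ (x i) := by
    filter_upwards [Ioi_mem_nhds (hx i)] with t (ht : 0 < t)
    have hpos (j : Fin n) : 0 < update x i t j := by
      rcases eq_or_ne j i with rfl | h
      · simpa using ht
      · simpa [h] using hx j
    have := edgePoly_le_of_isMaxOn hunif hk hmax (fun j => (hpos j).le)
      (sum_pos (fun j _ => pow_pos (hpos j) k) ⟨i, mem_univ i⟩)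
    rw [hψ, hψ, update_eq_self, hxS.2]
    linarith
  have hderiv : HasDerivAt ψ (lam * (k * x i ^ (k - 1)) - linkSum E i x) (x i) :=
    (((hasDerivAt_pow k (x i)).add_const _).const_mul lam).sub
      ((hasDerivAt_mul_const _).add_const _)
  linarith [hmin.hasDerivAt_eq_zero hderiv]

theorem exists_pos_eigenvector (hn : 0 < n) (hk : k ≠ 0) (hunif : ∀ e ∈ E, #e = k)
    (hconn : HConnected E) : ∃ (r : ℝ) (x : Fin n → ℝ), 0 ≤ r ∧ (∀ i, 0 < x i) ∧
      ∀ i, linkSum E i x = r * x i ^ (k - 1) := by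
  obtain ⟨x, hxS, hmax⟩ := exists_isMaxOn_edgePoly hn hk E
  have hx := pos_of_isMaxOn hconn hunif hk hxS hmax
  refine ⟨k * edgePoly E x, x, ?_, hx, linkSum_eq_of_isMaxOn hunif hk hxS hmax hx⟩
  exact mul_nonneg k.cast_nonneg (sum_nonneg fun e _ => prod_nonneg fun v _ => (hx v).le)

theorem deg_pos_of_mem_link {i j : Fin n} (h : j ∈ link E i) :
    (0 : ℝ) < deg E i ∧ (0 : ℝ) < deg E j := by
  obtain ⟨-, e, he, hi, hj⟩ := mem_link.1 h
  have hpos {v : Fin n} (hv : v ∈ e) : (0 : ℝ) < deg E v := by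
    exact_mod_cast card_pos.2 ⟨e, mem_filter.2 ⟨he, hv⟩⟩
  exact ⟨hpos hi, hpos hj⟩

/-- This is where `k ≥ 3` enters. -/
theorem exists_mem_link_mem_link (hunif : ∀ e ∈ E, #e = k) (hk : 3 ≤ k) {i j : Fin n}
    (h : j ∈ link E i) : ∃ w, w ∈ link E i ∧ w ∈ link E j := by
  obtain ⟨hji, e, he, hi, hj⟩ := mem_link.1 h
  obtain ⟨w, hw⟩ : ((e.erase i).erase j).Nonempty := by
    rw [← card_pos, card_erase_of_mem (mem_erase.2 ⟨hji, hj⟩), card_erase_of_mem hi, hunif e he]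
    omega
  obtain ⟨hwj, hwi, hwe⟩ : w ≠ j ∧ w ≠ i ∧ w ∈ e := by simpa using hw
  exact ⟨w, mem_link.2 ⟨hwi, e, he, hi, hwe⟩, mem_link.2 ⟨hwj, e, he, hj, hwe⟩⟩

def degPairSet (E : Finset (Finset (Fin n))) : Set ℝ :=
  {r | ∃ e ∈ E, ∃ i ∈ e, ∃ j ∈ e, i ≠ j ∧ r = √((deg E i : ℝ) * (deg E j : ℝ))}

theorem sqrt_mem_degPairSet {i j : Fin n} (h : j ∈ link E i) :
    √((deg E i : ℝ) * deg E j) ∈ degPairSet E := by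
  obtain ⟨hji, e, he, hi, hj⟩ := mem_link.1 h
  exact ⟨e, he, i, hi, j, hj, hji.symm, rfl⟩

theorem forall_mem_degPairSet {p : ℝ → Prop}
    (h : ∀ i, ∀ j ∈ link E i, p √((deg E i : ℝ) * deg E j)) : ∀ s ∈ degPairSet E, p s := by
  rintro _ ⟨e, he, i, hi, j, hj, hij, rfl⟩
  exact h i j (mem_link.2 ⟨hij.symm, e, he, hi, hj⟩)

theorem degPairSet_finite (E : Finset (Finset (Fin n))) : (degPairSet E).Finite :=
  (Set.finite_range fun p : Fin n × Fin n => √((deg E p.1 : ℝ) * deg E p.2)).subset <| by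
    rintro _ ⟨e, -, i, -, j, -, -, rfl⟩
    exact ⟨(i, j), rfl⟩

theorem deg_mul_deg_le_sq_of_sSup_le {r : ℝ} (hr : 0 ≤ r) (h : sSup (degPairSet E) ≤ r)
    {i j : Fin n} (hj : j ∈ link E i) : deg E i * deg E j ≤ r ^ 2 :=
  (Real.sqrt_le_left hr).1
    ((le_csSup (degPairSet_finite E).bddAbove (sqrt_mem_degPairSet hj)).trans h)

theorem sq_le_deg_mul_deg_of_le_sInf {r : ℝ} (hr : 0 ≤ r) (h : r ≤ sInf (degPairSet E))
    {i j : Fin n} (hj : j ∈ link E i) : r ^ 2 ≤ deg E i * deg E j :=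
  (Real.le_sqrt hr (by positivity)).1
    (h.trans (csInf_le (degPairSet_finite E).bddBelow (sqrt_mem_degPairSet hj)))

theorem degPairSet_eq_singleton (hunif : ∀ e ∈ E, #e = k) (hk : 2 ≤ k) (hE : E.Nonempty)
    {d : ℕ} (hd : ∀ i, deg E i = d) : degPairSet E = {(d : ℝ)} := by
  refine Set.eq_singleton_iff_nonempty_unique_mem.2 ⟨?_, forall_mem_degPairSet fun i j _ => by
    rw [hd, hd, Real.sqrt_mul_self d.cast_nonneg]⟩
  obtain ⟨e, he⟩ := hE
  obtain ⟨i, hi⟩ : e.Nonempty := card_pos.1 (by rw [hunif e he]; omega)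
  obtain ⟨j, hj, hji⟩ := exists_mem_ne (by rw [hunif e he]; omega) i
  exact ⟨_, sqrt_mem_degPairSet (mem_link.2 ⟨hji, e, he, hi, hj⟩)⟩

section Eigenvector

variable {r : ℝ} {x : Fin n → ℝ} {i j : Fin n}

theorem eigen_le_of_isMax (hunif : ∀ e ∈ E, #e = k) (hx : ∀ i, 0 < x i)
    (heig : ∀ i, linkSum E i x = r * x i ^ (k - 1)) (hi : ∀ w, x w ≤ x i)
    (hj : ∀ w ∈ link E i, x w ≤ x j) :
    r * x i ^ (k - 1) ≤ deg E i * x j ^ (k - 1) ∧ r * x j ^ (k - 1) ≤ deg E j * x i ^ (k - 1) := by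
  simp only [← heig, ← linkSum_const hunif]
  exact ⟨linkSum_le_linkSum (fun w _ => (hx w).le) hj,
    linkSum_le_linkSum (fun w _ => (hx w).le) fun w _ => hi w⟩

theorem eigen_ge_of_isMin (hunif : ∀ e ∈ E, #e = k) (hx : ∀ i, 0 < x i)
    (heig : ∀ i, linkSum E i x = r * x i ^ (k - 1)) (hi : ∀ w, x i ≤ x w)
    (hj : ∀ w ∈ link E i, x j ≤ x w) :
    deg E i * x j ^ (k - 1) ≤ r * x i ^ (k - 1) ∧ deg E j * x i ^ (k - 1) ≤ r * x j ^ (k - 1) := by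
  simp only [← heig, ← linkSum_const hunif]
  exact ⟨linkSum_le_linkSum (fun w _ => (hx j).le) hj,
    linkSum_le_linkSum (fun w _ => (hx i).le) fun w _ => hi w⟩

theorem sq_le_deg_mul_deg_of_isMax (hunif : ∀ e ∈ E, #e = k) (hr : 0 ≤ r) (hx : ∀ i, 0 < x i)
    (heig : ∀ i, linkSum E i x = r * x i ^ (k - 1)) (hi : ∀ w, x w ≤ x i)
    (hj : ∀ w ∈ link E i, x w ≤ x j) : r ^ 2 ≤ deg E i * deg E j := by
  obtain ⟨h₁, h₂⟩ := eigen_le_of_isMax hunif hx heig hi hj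
  have hxi := pow_pos (hx i) (k - 1)
  have hxj := pow_pos (hx j) (k - 1)
  have := mul_le_mul h₁ h₂ (by positivity) (by positivity)
  exact le_of_mul_le_mul_right (a := x i ^ (k - 1) * x j ^ (k - 1)) (by linarith)
    (mul_pos hxi hxj)

theorem deg_mul_deg_le_sq_of_isMin (hunif : ∀ e ∈ E, #e = k) (hx : ∀ i, 0 < x i)
    (heig : ∀ i, linkSum E i x = r * x i ^ (k - 1)) (hi : ∀ w, x i ≤ x w)
    (hj : ∀ w ∈ link E i, x j ≤ x w) : deg E i * deg E j ≤ r ^ 2 := by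
  obtain ⟨h₁, h₂⟩ := eigen_ge_of_isMin hunif hx heig hi hj
  have hxi := pow_pos (hx i) (k - 1)
  have hxj := pow_pos (hx j) (k - 1)
  have := mul_le_mul h₁ h₂ (by positivity) ((by positivity : (0 : ℝ) ≤ _).trans h₁)
  exact le_of_mul_le_mul_right (a := x i ^ (k - 1) * x j ^ (k - 1)) (by linarith)
    (mul_pos hxi hxj)

theorem eq_on_link_of_isMax (hunif : ∀ e ∈ E, #e = k) (hk : 3 ≤ k) (hr : 0 ≤ r)
    (hx : ∀ i, 0 < x i) (heig : ∀ i, linkSum E i x = r * x i ^ (k - 1)) (hi : ∀ w, x w ≤ x i)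
    (hjl : j ∈ link E i) (hj : ∀ w ∈ link E i, x w ≤ x j)
    (hdeg : deg E i * deg E j ≤ r ^ 2) : ∀ w ∈ link E i, x w = x i := by
  obtain ⟨h₁, h₂⟩ := eigen_le_of_isMax hunif hx heig hi hj
  have hxi := pow_pos (hx i) (k - 1)
  have hxj := pow_pos (hx j) (k - 1)
  obtain ⟨hdi, hdj⟩ := deg_pos_of_mem_link hjl
  have hr' : 0 < r := by nlinarith [mul_pos hdi hdj]
  have hprod := mul_le_mul_of_nonneg_right hdeg (mul_pos hxi hxj).le
  have hB : (0 : ℝ) ≤ deg E i * x j ^ (k - 1) := by positivity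
  have hD : (0 : ℝ) ≤ deg E j * x i ^ (k - 1) := by positivity
  have e₁ : r * x i ^ (k - 1) = deg E i * x j ^ (k - 1) :=
    h₁.antisymm (by nlinarith [mul_le_mul_of_nonneg_left h₂ hB, mul_pos hr' hxj])
  have e₂ : r * x j ^ (k - 1) = deg E j * x i ^ (k - 1) :=
    h₂.antisymm (by nlinarith [mul_le_mul_of_nonneg_left h₁ hD, mul_pos hr' hxi])
  rw [← heig, ← linkSum_const hunif] at e₁ e₂
  have hli := eq_of_linkSum_eq (fun w _ => hx w) hj e₁
  have hlj := eq_of_linkSum_eq (fun w _ => hx w) (fun w _ => hi w) e₂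
  obtain ⟨w, hwi, hwj⟩ := exists_mem_link_mem_link hunif hk hjl
  exact fun v hv => (hli v hv).trans ((hli w hwi).symm.trans (hlj w hwj))

theorem eq_on_link_of_isMin (hunif : ∀ e ∈ E, #e = k) (hk : 3 ≤ k) (hx : ∀ i, 0 < x i)
    (heig : ∀ i, linkSum E i x = r * x i ^ (k - 1)) (hi : ∀ w, x i ≤ x w)
    (hjl : j ∈ link E i) (hj : ∀ w ∈ link E i, x j ≤ x w)
    (hdeg : r ^ 2 ≤ deg E i * deg E j) : ∀ w ∈ link E i, x w = x i := by
  obtain ⟨h₁, h₂⟩ := eigen_ge_of_isMin hunif hx heig hi hj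
  have hxi := pow_pos (hx i) (k - 1)
  have hxj := pow_pos (hx j) (k - 1)
  obtain ⟨hdi, hdj⟩ := deg_pos_of_mem_link hjl
  have hprod := mul_le_mul_of_nonneg_right hdeg (mul_pos hxi hxj).le
  have hA : 0 ≤ r * x i ^ (k - 1) := (by positivity : (0 : ℝ) ≤ _).trans h₁
  have hC : 0 ≤ r * x j ^ (k - 1) := (by positivity : (0 : ℝ) ≤ _).trans h₂
  have e₁ : deg E i * x j ^ (k - 1) = r * x i ^ (k - 1) :=
    h₁.antisymm (by nlinarith [mul_le_mul_of_nonneg_left h₂ hA, mul_pos hdj hxi])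
  have e₂ : deg E j * x i ^ (k - 1) = r * x j ^ (k - 1) :=
    h₂.antisymm (by nlinarith [mul_le_mul_of_nonneg_left h₁ hC, mul_pos hdi hxj])
  rw [← heig, ← linkSum_const hunif] at e₁ e₂
  have hli := eq_of_linkSum_eq (fun _ _ => hx j) hj e₁
  have hlj := eq_of_linkSum_eq (fun _ _ => hx i) (fun w _ => hi w) e₂
  obtain ⟨w, hwi, hwj⟩ := exists_mem_link_mem_link hunif hk hjl
  exact fun v hv => ((hli v hv).symm.trans ((hli w hwi).trans (hlj w hwj).symm))

theorem le_sSup_degPairSet (hn : 0 < n) (hconn : HConnected E) (hunif : ∀ e ∈ E, #e = k)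
    (hk : 2 ≤ k) (hE : E.Nonempty) (hr : 0 ≤ r) (hx : ∀ i, 0 < x i)
    (heig : ∀ i, linkSum E i x = r * x i ^ (k - 1)) : r ≤ sSup (degPairSet E) := by
  obtain ⟨i, -, hi⟩ := exists_max_image univ x ⟨⟨0, hn⟩, mem_univ _⟩
  obtain ⟨j, hjl, hj⟩ := exists_max_image (link E i) x (hconn.link_nonempty hunif hk hE i)
  have hsq := sq_le_deg_mul_deg_of_isMax hunif hr hx heig (fun w => hi w (mem_univ w)) hj
  exact ((Real.le_sqrt hr (by positivity)).2 hsq).trans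
    (le_csSup (degPairSet_finite E).bddAbove (sqrt_mem_degPairSet hjl))

theorem sInf_degPairSet_le (hn : 0 < n) (hconn : HConnected E) (hunif : ∀ e ∈ E, #e = k)
    (hk : 2 ≤ k) (hE : E.Nonempty) (hr : 0 ≤ r) (hx : ∀ i, 0 < x i)
    (heig : ∀ i, linkSum E i x = r * x i ^ (k - 1)) : sInf (degPairSet E) ≤ r := by
  obtain ⟨i, -, hi⟩ := exists_min_image univ x ⟨⟨0, hn⟩, mem_univ _⟩
  obtain ⟨j, hjl, hj⟩ := exists_min_image (link E i) x (hconn.link_nonempty hunif hk hE i)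
  have hsq := deg_mul_deg_le_sq_of_isMin hunif hx heig (fun w => hi w (mem_univ w)) hj
  exact (csInf_le (degPairSet_finite E).bddBelow (sqrt_mem_degPairSet hjl)).trans
    ((Real.sqrt_le_left hr).2 hsq)

theorem const_of_forall_deg_mul_deg_le (hn : 0 < n) (hconn : HConnected E)
    (hunif : ∀ e ∈ E, #e = k) (hk : 3 ≤ k) (hE : E.Nonempty) (hr : 0 ≤ r) (hx : ∀ i, 0 < x i)
    (heig : ∀ i, linkSum E i x = r * x i ^ (k - 1))
    (hdeg : ∀ i, ∀ j ∈ link E i, deg E i * deg E j ≤ r ^ 2) (v w : Fin n) : x v = x w := by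
  obtain ⟨i, -, hi⟩ := exists_max_image univ x ⟨⟨0, hn⟩, mem_univ _⟩
  have hmax (v : Fin n) : x v = x i → ∀ u ∈ link E v, x u = x i := by
    intro hv
    obtain ⟨j, hjl, hj⟩ := exists_max_image (link E v) x (hconn.link_nonempty hunif (by omega) hE v)
    have hv' (u : Fin n) : x u ≤ x v := hv ▸ hi u (mem_univ u)
    exact fun u hu =>
      (eq_on_link_of_isMax hunif hk hr hx heig hv' hjl hj (hdeg v j hjl) u hu).trans hv
  have hall := hconn.forall_of_link_closed (p := fun u => x u = x i) rfl hmax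
  exact (hall v).trans (hall w).symm

theorem const_of_forall_sq_le_deg_mul_deg (hn : 0 < n) (hconn : HConnected E)
    (hunif : ∀ e ∈ E, #e = k) (hk : 3 ≤ k) (hE : E.Nonempty) (hx : ∀ i, 0 < x i)
    (heig : ∀ i, linkSum E i x = r * x i ^ (k - 1))
    (hdeg : ∀ i, ∀ j ∈ link E i, r ^ 2 ≤ deg E i * deg E j) (v w : Fin n) : x v = x w := by
  obtain ⟨i, -, hi⟩ := exists_min_image univ x ⟨⟨0, hn⟩, mem_univ _⟩
  have hmin (v : Fin n) : x v = x i → ∀ u ∈ link E v, x u = x i := by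
    intro hv
    obtain ⟨j, hjl, hj⟩ := exists_min_image (link E v) x (hconn.link_nonempty hunif (by omega) hE v)
    have hv' (u : Fin n) : x v ≤ x u := hv ▸ hi u (mem_univ u)
    exact fun u hu =>
      (eq_on_link_of_isMin hunif hk hx heig hv' hjl hj (hdeg v j hjl) u hu).trans hv
  have hall := hconn.forall_of_link_closed (p := fun u => x u = x i) rfl hmin
  exact (hall v).trans (hall w).symm

theorem exists_deg_eq_of_const (hn : 0 < n) (hunif : ∀ e ∈ E, #e = k) (hx : ∀ i, 0 < x i)
    (heig : ∀ i, linkSum E i x = r * x i ^ (k - 1)) (hconst : ∀ v w, x v = x w) :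
    ∃ d : ℕ, ∀ i, deg E i = d := by
  have hdeg (i : Fin n) : (deg E i : ℝ) = r := by
    have h := heig i
    rw [show x = fun _ => x i from funext fun v => hconst v i, linkSum_const hunif] at h
    exact mul_right_cancel₀ (pow_pos (hx i) _).ne' h
  exact ⟨deg E ⟨0, hn⟩, fun i => by exact_mod_cast (hdeg i).trans (hdeg _).symm⟩

end Eigenvector

end HypSR


open Finset in
theorem stmt14 {n k : ℕ} (hn : 0 < n) (hk : 3 ≤ k)
    (E : Finset (Finset (Fin n))) (hunif : ∀ e ∈ E, e.card = k)
    (hconn : HConnected E)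
    (P : Set ℝ)
    (hP : P = {r : ℝ | ∃ e ∈ E, ∃ i ∈ e, ∃ j ∈ e, i ≠ j ∧
      r = Real.sqrt ((deg E i : ℝ) * (deg E j : ℝ))}) :
    sInf P ≤ specRad (adjT E k) ∧ specRad (adjT E k) ≤ sSup P ∧
      ((specRad (adjT E k) = sInf P ∨ specRad (adjT E k) = sSup P) ↔
        ∃ d : ℕ, ∀ i : Fin n, deg E i = d) := by
  obtain ⟨r, x, hr, hx, heig⟩ := exists_pos_eigenvector hn (by omega) hunif hconn
  rw [specRad_adjT_eq hn hunif hr hx heig]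
  replace hP : P = degPairSet E := hP
  subst hP
  rcases E.eq_empty_or_nonempty with rfl | hE
  · have hr0 : r = 0 := by
      simpa [linkSum, (pow_pos (hx ⟨0, hn⟩) _).ne'] using (heig ⟨0, hn⟩).symm
    simpa [degPairSet, deg, hr0] using (⟨0, fun _ => rfl⟩ : ∃ d : ℕ, ∀ _ : Fin n, 0 = d)
  have hlower := sInf_degPairSet_le hn hconn hunif (by omega) hE hr hx heig
  have hupper := le_sSup_degPairSet hn hconn hunif (by omega) hE hr hx heig
  refine ⟨hlower, hupper, fun h => exists_deg_eq_of_const hn hunif hx heig ?_, fun ⟨d, hd⟩ => ?_⟩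
  · rcases h with h | h
    · exact const_of_forall_sq_le_deg_mul_deg hn hconn hunif hk hE hx heig
        fun _ _ => sq_le_deg_mul_deg_of_le_sInf hr h.le
    · exact const_of_forall_deg_mul_deg_le hn hconn hunif hk hE hr hx heig
        fun _ _ => deg_mul_deg_le_sq_of_sSup_le hr h.ge
  · rw [degPairSet_eq_singleton hunif (by omega) hE hd, csInf_singleton] at hlower ⊢
    rw [degPairSet_eq_singleton hunif (by omega) hE hd, csSup_singleton] at hupper
    exact Or.inl (le_antisymm hupper hlower)
end
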